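/- Define Qₙ(x) by Q₁(x) = x² and Q_{n+1}(x) = (n!)² x² + ∑_{j=0}^{n-1} C(n,j) C(n,j+1) Q_{j+1}(x) Q_{n-j}(x). Then Qₙ(1) = n! · (n-1)! for all n ≥ 1. -/

import Mathlib

open Finset

/-! Writing `aₙ = n! (n-1)!`, every summand `C(n,j) C(n,j+1) a_{j+1} a_{n-j}` of the recurrence
equals `(n!)²`, so the right-hand side at `x = 1` is `(n + 1) (n!)² = a_{n+1}`; strong induction
on `n` finishes. -/

namespace Nat

theorem choose_mul_choose_succ_mul_factorials {n j : ℕ} (hj : j < n) :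
    n.choose j * n.choose (j + 1) * ((j + 1)! * j !) * ((n - j)! * (n - j - 1)!) = n ! ^ 2 := by
  have hleft := choose_mul_factorial_mul_factorial hj.le
  have hright := choose_mul_factorial_mul_factorial (succ_le_of_lt hj)
  rw [sub_succ'] at hright
  calc _ = (n.choose j * j ! * (n - j)!) * (n.choose (j + 1) * (j + 1)! * (n - j - 1)!) := by ring
    _ = n ! ^ 2 := by rw [hleft, hright, sq]

theorem factorial_sq_add_sum_choose_mul_choose_mul_factorials (n : ℕ) :
    n ! ^ 2 + ∑ j ∈ range n,
      n.choose j * n.choose (j + 1) * ((j + 1)! * (j + 1 - 1)!) * ((n - j)! * (n - j - 1)!) =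
    (n + 1)! * (n + 1 - 1)! := by
  have hterm : ∀ j ∈ range n, n.choose j * n.choose (j + 1) * ((j + 1)! * (j + 1 - 1)!) *
      ((n - j)! * (n - j - 1)!) = n ! ^ 2 := fun j hj => by
    rw [Nat.add_sub_cancel]
    exact choose_mul_choose_succ_mul_factorials (mem_range.mp hj)
  rw [sum_congr rfl hterm, sum_const, card_range, smul_eq_mul, Nat.add_sub_cancel,
    factorial_succ]
  ring

end Nat

theorem Q_poly_at_one (Q : ℕ → ℝ → ℝ)
    (hQ1 : ∀ x : ℝ, Q 1 x = x ^ 2)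
    (hrec : ∀ n : ℕ, 1 ≤ n → ∀ x : ℝ,
      Q (n + 1) x = (n.factorial : ℝ) ^ 2 * x ^ 2 +
        ∑ j ∈ Finset.range n,
          (n.choose j : ℝ) * (n.choose (j + 1) : ℝ) * Q (j + 1) x * Q (n - j) x) :
    ∀ n : ℕ, 1 ≤ n → Q n 1 = (n.factorial : ℝ) * ((n - 1).factorial : ℝ) := by
  intro n hn
  induction n using Nat.strong_induction_on with
  | _ n ih =>
    match n, hn with
    | 1, _ => simp [hQ1]
    | m + 2, _ =>
      have hsummand : ∀ j ∈ range (m + 1), ((m + 1).choose j : ℝ) * ((m + 1).choose (j + 1) : ℝ) *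
          Q (j + 1) 1 * Q (m + 1 - j) 1 = ((m + 1).choose j : ℝ) * ((m + 1).choose (j + 1) : ℝ) *
          (((j + 1).factorial : ℝ) * ((j + 1 - 1).factorial : ℝ)) *
          (((m + 1 - j).factorial : ℝ) * ((m + 1 - j - 1).factorial : ℝ)) := fun j hj => by
        have hj := mem_range.mp hj
        rw [ih (j + 1) (by omega) (by omega), ih (m + 1 - j) (by omega) (by omega)]
      rw [hrec (m + 1) (by omega), sum_congr rfl hsummand, one_pow, mul_one]
      exact_mod_cast Nat.factorial_sq_add_sum_choose_mul_choose_mul_factorials (m + 1)
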